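/- Let Γ be a nonempty finite set and N a quadratic normalisation on Γ satisfying Condition (home). Then a single left-to-right run of the Mealy automaton M_{Γ,N} computes normal forms of right multiples: for every N-normal nonempty word w over Γ and every q ∈ Γ, N(w ++ [q]) = τ_{reverse(w)}(q) :: reverse(σ_q(reverse(w))), where τ is extended to words by τ_ε(q) = q and τ_{i :: s}(q) = τ_s(τ_i(q)). -/
import Mathlib


namespace Stmt6

variable {α : Type}

/-- Apply the two-letter normalisation `nf` at (1-indexed) position `i` of a word. -/
def applyAtL (nf : α → α → List α) : ℕ → List α → List α
  | 1, x :: y :: s => nf x y ++ s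
  | n + 2, x :: s => x :: applyAtL nf (n + 1) s
  | _, w => w

/-- Apply the two-letter normalisation along a finite sequence of positions
(the first position in the list is applied first). -/
def seqApplyL (nf : α → α → List α) (l : List ℕ) (w : List α) : List α :=
  l.foldl (fun w i => applyAtL nf i w) w

/-- Production function of the Mealy automaton `M_{Γ,N}` with state `x`. -/
def prodFn (tau sig : α → α → α) : α → List α → List α
  | _, [] => []
  | x, i :: s => sig x i :: prodFn tau sig (tau i x) s

/-- Extension of `τ` to words: `τ_ε(q) = q` and `τ_{i :: s}(q) = τ_s(τ_i(q))`. -/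
def tauWord (tau : α → α → α) : List α → α → α
  | [], q => q
  | i :: s, q => tauWord tau s (tau i q)

/-- Right-to-left pass of the Mealy automaton: the first argument is the reversed word. -/
def G (tau sig : α → α → α) : List α → α → List α
  | [], q => [q]
  | a :: r, q => G tau sig r (tau a q) ++ [sig q a]

lemma G_eq (tau sig : α → α → α) :
    ∀ (r : List α) (q : α), G tau sig r q = tauWord tau r q :: (prodFn tau sig q r).reverse := by
  intro r
  induction r with
  | nil => intro q; simp [G, tauWord, prodFn]
  | cons a r ih => intro q; simp [G, tauWord, prodFn, ih]

/-- for a quadratic normalisation `(Γ,N)` satisfying Condition (home),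
a single left-to-right run of the Mealy automaton `M_{Γ,N}` computes the normal form of
a right multiple: for `w` an `N`-normal nonempty word and `q ∈ Γ`,
`N(w ++ [q]) = τ_{reverse w}(q) :: reverse (σ_q (reverse w))`. -/
theorem single_run_computes_normal_form
    {Γ : Type} [Fintype Γ] [Nonempty Γ]
    (N : List Γ → List Γ) (tau sig : Γ → Γ → Γ)
    (hlen : ∀ w : List Γ, (N w).length = w.length)
    (hone : ∀ x : Γ, N [x] = [x])
    (habs : ∀ u w v : List Γ, w ≠ [] → N (u ++ N w ++ v) = N (u ++ w ++ v))
    (hquad₁ : ∀ w : List Γ, w ≠ [] →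
      (N w = w ↔ ∀ p s : List Γ, ∀ x y : Γ, w = p ++ [x, y] ++ s → N [x, y] = [x, y]))
    (hquad₂ : ∀ w : List Γ, w ≠ [] →
      ∃ l : List ℕ, N w = seqApplyL (fun x y => N [x, y]) l w)
    (hNbar : ∀ x y : Γ, N [x, y] = [tau x y, sig y x])
    (hhome : ∀ x y z : Γ,
      N [x, y, z] = seqApplyL (fun a b => N [a, b]) [1, 2, 1] [x, y, z] ∧
      N [x, y, z] = seqApplyL (fun a b => N [a, b]) [2, 1, 2, 1] [x, y, z]) :
    ∀ (w : List Γ) (q : Γ), w ≠ [] → N w = w →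
      N (w ++ [q]) =
        tauWord tau w.reverse q :: (prodFn tau sig q w.reverse).reverse := by
  -- basic congruence consequences of `habs`
  have idem : ∀ w : List Γ, w ≠ [] → N (N w) = N w := by
    intro w hw
    simpa using habs [] w [] hw
  have pre : ∀ u t : List Γ, u ≠ [] → N (N u ++ t) = N (u ++ t) := by
    intro u t hu
    simpa using habs [] u t hu
  have suf : ∀ u t : List Γ, u ≠ [] → N (t ++ N u) = N (t ++ u) := by
    intro u t hu
    simpa using habs t u [] hu
  -- normality of the prefix of a normal word
  have prefix_normal : ∀ (w : List Γ) (a : Γ), w ≠ [] →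
      N (w ++ [a]) = w ++ [a] → N w = w := by
    intro w a hw h
    refine (hquad₁ w hw).2 ?_
    intro p s x y heq
    refine (hquad₁ (w ++ [a]) (by simp)).1 h p (s ++ [a]) x y ?_
    rw [heq]; simp
  -- the domino lemma from Condition (home)
  have domino : ∀ b a q : Γ, N [b, a] = [b, a] →
      N [sig (tau a q) b, sig q a] = [sig (tau a q) b, sig q a] := by
    intro b a q hba
    have h := (hhome b a q).1
    have htb : tau b a = b ∧ sig a b = a := by
      have h2 := (hNbar b a).symm.trans hba
      simp only [List.cons.injEq, and_true] at h2
      exact h2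
    have hc : seqApplyL (fun x y => N [x, y]) [1, 2, 1] [b, a, q]
        = [tau b (tau a q), sig (tau a q) b, sig q a] := by
      simp [seqApplyL, applyAtL, hNbar, htb.1, htb.2]
    rw [hc] at h
    have hn : N [tau b (tau a q), sig (tau a q) b, sig q a]
        = [tau b (tau a q), sig (tau a q) b, sig q a] := by
      rw [← h]; exact idem [b, a, q] (by simp)
    exact (hquad₁ _ (by simp)).1 hn [tau b (tau a q)] [] _ _ (by simp)
  -- extending a normal word by a letter whose junction pair is normal
  have extend_normal : ∀ (t : List Γ) (x y : Γ),
      N (t ++ [x]) = t ++ [x] → N [x, y] = [x, y] →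
      N (t ++ [x] ++ [y]) = t ++ [x] ++ [y] := by
    intro t x y h1 h2
    refine (hquad₁ (t ++ [x] ++ [y]) (by simp)).2 ?_
    intro p s c d heq
    rcases s.eq_nil_or_concat with rfl | ⟨s', e, rfl⟩
    · have heq' : (t ++ [x]) ++ [y] = (p ++ [c]) ++ [d] := by
        simpa [List.append_assoc] using heq
      obtain ⟨h3, h4⟩ := List.append_inj' heq' rfl
      obtain ⟨h5, h6⟩ := List.append_inj' h3 rfl
      obtain rfl : y = d := by simpa using h4
      obtain rfl : x = c := by simpa using h6
      exact h2
    · have heq' : (t ++ [x]) ++ [y] = (p ++ [c, d] ++ s') ++ [e] := by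
        simpa [List.append_assoc] using heq
      obtain ⟨h3, h4⟩ := List.append_inj' heq' rfl
      exact (hquad₁ (t ++ [x]) (by simp)).1 h1 p s' c d h3
  -- main induction
  have main : ∀ (w : List Γ) (q : Γ), w ≠ [] → N w = w →
      N (w ++ [q]) = G tau sig w.reverse q := by
    intro w
    induction w using List.reverseRecOn with
    | nil => intro q hne _; exact absurd rfl hne
    | append_singleton w' a ih =>
      intro q _ hnorm
      rcases w'.eq_nil_or_concat with rfl | ⟨w'', b, hw⟩
      · simp [G, hNbar]
      · rw [List.concat_eq_append] at hw
        subst hw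
        have hw'ne : w'' ++ [b] ≠ [] := by simp
        have hw' : N (w'' ++ [b]) = w'' ++ [b] := prefix_normal _ a hw'ne hnorm
        have hba : N [b, a] = [b, a] := by
          exact (hquad₁ (w'' ++ [b] ++ [a]) (by simp)).1 hnorm w'' [] b a (by simp)
        have hrev : (w'' ++ [b]).reverse = b :: w''.reverse := by simp
        -- the key chain of N-equalities
        have step1 : N (w'' ++ [b] ++ [a] ++ [q]) = N (w'' ++ [b] ++ [tau a q, sig q a]) := by
          have := (suf [a, q] (w'' ++ [b]) (by simp)).symm
          rw [hNbar] at this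
          simpa [List.append_assoc] using this
        have step2 : N (w'' ++ [b] ++ [tau a q, sig q a])
            = N (N (w'' ++ [b] ++ [tau a q]) ++ [sig q a]) := by
          rw [pre (w'' ++ [b] ++ [tau a q]) [sig q a] (by simp)]
          simp [List.append_assoc]
        have hih : N (w'' ++ [b] ++ [tau a q]) = G tau sig (w'' ++ [b]).reverse (tau a q) :=
          ih (tau a q) hw'ne hw'
        -- the result of the pass is normal
        have huG : G tau sig (w'' ++ [b]).reverse (tau a q)
            = G tau sig w''.reverse (tau b (tau a q)) ++ [sig (tau a q) b] := by
          rw [hrev]; rfl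
        have hunorm : N (G tau sig (w'' ++ [b]).reverse (tau a q))
            = G tau sig (w'' ++ [b]).reverse (tau a q) := by
          rw [← hih]; exact idem _ (by simp)
        have hjunction : N [sig (tau a q) b, sig q a] = [sig (tau a q) b, sig q a] :=
          domino b a q hba
        have hfinal : N (G tau sig (w'' ++ [b]).reverse (tau a q) ++ [sig q a])
            = G tau sig (w'' ++ [b]).reverse (tau a q) ++ [sig q a] := by
          rw [huG]
          refine extend_normal _ _ _ ?_ hjunction
          rw [← huG]; exact hunorm
        calc N (w'' ++ [b] ++ [a] ++ [q])
            = N (w'' ++ [b] ++ [tau a q, sig q a]) := step1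
          _ = N (N (w'' ++ [b] ++ [tau a q]) ++ [sig q a]) := step2
          _ = N (G tau sig (w'' ++ [b]).reverse (tau a q) ++ [sig q a]) := by rw [hih]
          _ = G tau sig (w'' ++ [b]).reverse (tau a q) ++ [sig q a] := hfinal
          _ = G tau sig (w'' ++ [b] ++ [a]).reverse q := by simp [G]
  intro w q hne hnorm
  rw [main w q hne hnorm, G_eq]

end Stmt6
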